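/- With v_2 defined by the recursive Mex algorithm, for every n ≥ 0 one has v_2(n+1) - v_2(n) ∈ {2, 3, 4, 5, 6, 7, 8}. -/

import Mathlib

/-!
Write `p k = v2 k - v1 k`, `q k = v3 k - v2 k`, and let `M n` be the least positive integer
missing from `D_n`. As `0 ∈ F_n`, the set whose mex is `v2 (n+1)` contains `[0, v1 (n+1)]`, so
`v2 (n+1) = v1 (n+1) + p (n+1)` with `p (n+1)` the least `x > 0` such that `x ∉ D_n` and
`v1 (n+1) + x ∉ F_n`; likewise for `q (n+1)` with `v2 (n+1)` in place of `v1 (n+1)`.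

By induction, `p k < M k`, `q k < M k` and `M k ≤ p k + 2`. Hence `v2` has gaps at least `2`,
`v3` gaps at least `3` and `v3 - v1 = p + q` gaps at least `2`. Above `M n`, `D_n` consists of
values `p k + q k`, and the elements of `F_n` from `v1 (n+1) + M n` on are values `v3 k`; these
separations force `M n ≤ p (n+1) ≤ M n + 2`, `q (n+1) = M n` and `[1, p (n+1)] ⊆ D_(n+1)`,
which propagates the invariant. The separations of `v2` and `v3` also forbid them to cover four
consecutive integers above `v1 n`, so `v1 (n+1) ≤ v1 n + 4`. Finally
`v2 (n+1) - v2 n = (v1 (n+1) - v1 n) + (p (n+1) - p n)` with both summands in `[1, 4]`.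
-/

/-- Minimum excluded value of a set of natural numbers. -/
noncomputable def mex (S : Set ℕ) : ℕ := sInf {m : ℕ | m ∉ S}

/-- Coordinates of a set of triples. -/
def coords (G : Set (ℕ × ℕ × ℕ)) : Set ℕ :=
  {k | ∃ x ∈ G, k = x.1 ∨ k = x.2.1 ∨ k = x.2.2}

/-- Pairwise coordinate differences of a set of triples. -/
def diffs (G : Set (ℕ × ℕ × ℕ)) : Set ℕ :=
  {d | ∃ x ∈ G, d = x.2.1 - x.1 ∨ d = x.2.2 - x.2.1 ∨ d = x.2.2 - x.1}

/-- One step of the Mex algorithm: the next P-position. -/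
noncomputable def step (G : Set (ℕ × ℕ × ℕ)) : ℕ × ℕ × ℕ :=
  let F := coords G
  let D := diffs G
  let a := mex F
  let b := mex ((fun d => a + d) '' D ∪ Set.Icc 1 a ∪ F)
  let c := mex ((fun d => b + d) '' D ∪ Set.Icc 1 b ∪ F)
  (a, b, c)

/-- The sets `G_n` of P-positions computed by the Mex algorithm. -/
noncomputable def Gset : ℕ → Set (ℕ × ℕ × ℕ)
  | 0 => {(0, 0, 0)}
  | n + 1 => Gset n ∪ {step (Gset n)}

/-- The `n`-th P-position `(v_1(n), v_2(n), v_3(n))`. -/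
noncomputable def v : ℕ → ℕ × ℕ × ℕ
  | 0 => (0, 0, 0)
  | n + 1 => step (Gset n)

noncomputable def v1 (n : ℕ) : ℕ := (v n).1
noncomputable def v2 (n : ℕ) : ℕ := (v n).2.1
noncomputable def v3 (n : ℕ) : ℕ := (v n).2.2

/-- `F_n`: the set of coordinates of elements of `G_n`. -/
noncomputable def Fset (n : ℕ) : Set ℕ := coords (Gset n)

/-- `D_n`: the set of pairwise coordinate differences over `G_n`. -/
noncomputable def Dset (n : ℕ) : Set ℕ := diffs (Gset n)

section Mex

variable {S T : Set ℕ} {m t : ℕ}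

lemma mex_le_of_notMem (h : m ∉ S) : mex S ≤ m := Nat.sInf_le h

lemma mem_of_lt_mex (h : m < mex S) : m ∈ S := by
  simpa using Nat.notMem_of_lt_sInf h

lemma mex_notMem (hS : S.Finite) : mex S ∉ S :=
  Nat.sInf_mem hS.infinite_compl.nonempty

lemma mex_pos (hS : S.Finite) (h0 : 0 ∈ S) : 0 < mex S :=
  Nat.pos_of_ne_zero fun h => mex_notMem hS (h ▸ h0)

lemma mex_mono (hST : S ⊆ T) (hT : T.Finite) : mex S ≤ mex T :=
  mex_le_of_notMem fun h => mex_notMem hT (hST h)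

lemma lt_mex (hS : S.Finite) (h : ∀ k ≤ t, k ∈ S) : t < mex S :=
  lt_of_not_ge fun hle => mex_notMem hS (h _ hle)

lemma mex_eq_of_forall (hm : m ∉ S) (h : ∀ k < m, k ∈ S) : mex S = m :=
  (mex_le_of_notMem hm).antisymm <| le_of_not_gt fun hlt =>
    Nat.sInf_mem (s := {k | k ∉ S}) ⟨m, hm⟩ (h _ hlt)

/-- Up to `t` the set `(t + D) ∪ [1, t] ∪ F` is full; above `t` it is the translate of
`{0} ∪ D ∪ (F - t)` by `t`. -/
lemma mex_image_add_union {D F : Set ℕ} (hD : D.Finite) (hF : F.Finite) (h0 : 0 ∈ F) (t : ℕ) :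
    mex ((t + ·) '' D ∪ Set.Icc 1 t ∪ F) = t + mex (insert 0 (D ∪ (t + ·) ⁻¹' F)) := by
  have hE : (insert 0 (D ∪ (t + ·) ⁻¹' F)).Finite :=
    (hD.union (hF.preimage (add_right_injective t).injOn)).insert 0
  have hpos := mex_pos hE (Set.mem_insert 0 _)
  refine mex_eq_of_forall ?_ fun k hk => ?_
  · rintro ((⟨x, hx, hxt⟩ | ⟨-, hle⟩) | hxF)
    · exact mex_notMem hE (Or.inr (Or.inl (add_right_injective t hxt ▸ hx)))
    · omega
    · exact mex_notMem hE (Or.inr (Or.inr hxF))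
  rcases Nat.lt_or_ge t k with htk | hkt
  · obtain ⟨x, rfl⟩ := Nat.exists_eq_add_of_lt htk
    rcases mem_of_lt_mex (S := insert 0 (D ∪ (t + ·) ⁻¹' F)) (m := x + 1) (by omega) with
      h | h | h
    · omega
    · exact Or.inl (Or.inl ⟨x + 1, h, by simp only; omega⟩)
    · exact Or.inr (by simpa [add_assoc] using h)
  · rcases Nat.eq_zero_or_pos k with rfl | hk0
    · exact Or.inr h0
    · exact Or.inl (Or.inr ⟨hk0, hkt⟩)

end Mex

lemma Gset_eq_image (n : ℕ) : Gset n = v '' Set.Iic n := by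
  induction n with
  | zero => ext x; simp [Gset, v, eq_comm]
  | succ n ih =>
    change Gset n ∪ {v (n + 1)} = _
    ext x
    simp only [ih, Set.mem_union, Set.mem_image, Set.mem_Iic, Set.mem_singleton_iff,
      Nat.le_succ_iff]
    constructor
    · rintro (⟨k, hk, rfl⟩ | rfl)
      exacts [⟨k, Or.inl hk, rfl⟩, ⟨n + 1, Or.inr rfl, rfl⟩]
    · rintro ⟨k, hk | rfl, rfl⟩
      exacts [Or.inl ⟨k, hk, rfl⟩, Or.inr rfl]

lemma coords_finite {G : Set (ℕ × ℕ × ℕ)} (hG : G.Finite) : (coords G).Finite :=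
  (hG.biUnion fun x _ => Set.toFinite {x.1, x.2.1, x.2.2}).subset
    fun _ ⟨x, hx, hk⟩ => Set.mem_biUnion hx (by simpa using hk)

lemma diffs_finite {G : Set (ℕ × ℕ × ℕ)} (hG : G.Finite) : (diffs G).Finite :=
  (hG.biUnion fun x _ => Set.toFinite {x.2.1 - x.1, x.2.2 - x.2.1, x.2.2 - x.1}).subset
    fun _ ⟨x, hx, hk⟩ => Set.mem_biUnion hx (by simpa using hk)

lemma Fset_finite (n : ℕ) : (Fset n).Finite :=
  coords_finite (Gset_eq_image n ▸ (Set.finite_Iic n).image v)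

lemma Dset_finite (n : ℕ) : (Dset n).Finite :=
  diffs_finite (Gset_eq_image n ▸ (Set.finite_Iic n).image v)

lemma mem_Fset {n x : ℕ} : x ∈ Fset n ↔ ∃ k ≤ n, x = v1 k ∨ x = v2 k ∨ x = v3 k := by
  simp [Fset, coords, Gset_eq_image, v1, v2, v3]

lemma Fset_mono {m n : ℕ} (h : m ≤ n) : Fset m ⊆ Fset n := fun _ hx =>
  let ⟨k, hk, hx⟩ := mem_Fset.1 hx
  mem_Fset.2 ⟨k, hk.trans h, hx⟩

lemma zero_mem_Fset (n : ℕ) : 0 ∈ Fset n := mem_Fset.2 ⟨0, n.zero_le, Or.inl rfl⟩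

lemma v1_succ (n : ℕ) : v1 (n + 1) = mex (Fset n) := rfl

lemma mem_Fset_of_le_v1 {n m : ℕ} (h : m ≤ v1 n) : m ∈ Fset n := by
  induction n with
  | zero => exact (Nat.le_zero.1 h) ▸ zero_mem_Fset 0
  | succ n ih =>
    rcases h.lt_or_eq with h | rfl
    · exact Fset_mono n.le_succ (mem_of_lt_mex h)
    · exact mem_Fset.2 ⟨n + 1, le_rfl, Or.inl rfl⟩

lemma v1_strictMono : StrictMono v1 :=
  strictMono_nat_of_lt_succ fun n => lt_of_not_ge fun h =>
    mex_notMem (Fset_finite n) (mem_Fset_of_le_v1 h)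

noncomputable def freshGap (n t : ℕ) : ℕ := mex (insert 0 (Dset n ∪ (t + ·) ⁻¹' Fset n))

noncomputable def freshDiff (n : ℕ) : ℕ := mex (insert 0 (Dset n))

lemma freshGap_finite (n t : ℕ) : (insert 0 (Dset n ∪ (t + ·) ⁻¹' Fset n)).Finite :=
  ((Dset_finite n).union ((Fset_finite n).preimage (add_right_injective t).injOn)).insert 0

lemma freshGap_le {n t x : ℕ} (hx : 0 < x) (hD : x ∉ Dset n) (hF : t + x ∉ Fset n) :
    freshGap n t ≤ x :=
  mex_le_of_notMem <| by rintro (h | h | h) <;> simp_all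

lemma mem_of_lt_freshGap {n t x : ℕ} (hx : 0 < x) (h : x < freshGap n t) :
    x ∈ Dset n ∨ t + x ∈ Fset n :=
  (mem_of_lt_mex h).resolve_left hx.ne'

lemma freshDiff_le_freshGap (n t : ℕ) : freshDiff n ≤ freshGap n t :=
  mex_mono (Set.insert_subset_insert Set.subset_union_left) (freshGap_finite n t)

lemma v2_succ (n : ℕ) : v2 (n + 1) = v1 (n + 1) + freshGap n (v1 (n + 1)) :=
  mex_image_add_union (Dset_finite n) (Fset_finite n) (zero_mem_Fset n) _

lemma v3_succ (n : ℕ) : v3 (n + 1) = v2 (n + 1) + freshGap n (v2 (n + 1)) :=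
  mex_image_add_union (Dset_finite n) (Fset_finite n) (zero_mem_Fset n) _

noncomputable def gap12 (k : ℕ) : ℕ := v2 k - v1 k

noncomputable def gap23 (k : ℕ) : ℕ := v3 k - v2 k

lemma v1_add_gap12 (k : ℕ) : v1 k + gap12 k = v2 k := by
  cases k with
  | zero => rfl
  | succ n => rw [gap12, v2_succ]; omega

lemma v2_add_gap23 (k : ℕ) : v2 k + gap23 k = v3 k := by
  cases k with
  | zero => rfl
  | succ n => rw [gap23, v3_succ]; omega

lemma gap12_succ (n : ℕ) : gap12 (n + 1) = freshGap n (v1 (n + 1)) := by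
  rw [gap12, v2_succ]; omega

lemma gap23_succ (n : ℕ) : gap23 (n + 1) = freshGap n (v2 (n + 1)) := by
  rw [gap23, v3_succ]; omega

lemma mem_Dset {n x : ℕ} :
    x ∈ Dset n ↔ ∃ k ≤ n, x = gap12 k ∨ x = gap23 k ∨ x = gap12 k + gap23 k := by
  simp only [Dset, diffs, Gset_eq_image, Set.exists_mem_image, Set.mem_Iic]
  refine exists_congr fun k => and_congr_right fun _ => ?_
  have h12 := v1_add_gap12 k
  have h23 := v2_add_gap23 k
  change x = v2 k - v1 k ∨ x = v3 k - v2 k ∨ x = v3 k - v1 k ↔ _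
  omega

lemma exists_eq_gap12_add_gap23 {m d : ℕ} (hd : d ∈ Dset m)
    (hlt : ∀ k ≤ m, gap12 k < d ∧ gap23 k < d) : ∃ k ≤ m, d = gap12 k + gap23 k := by
  obtain ⟨k, hk, hd⟩ := mem_Dset.1 hd
  have := hlt k hk
  exact ⟨k, hk, by omega⟩

lemma Dset_mono {m n : ℕ} (h : m ≤ n) : Dset m ⊆ Dset n := fun _ hx =>
  let ⟨k, hk, hx⟩ := mem_Dset.1 hx
  mem_Dset.2 ⟨k, hk.trans h, hx⟩

lemma freshDiff_pos (n : ℕ) : 0 < freshDiff n :=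
  mex_pos ((Dset_finite n).insert 0) (Set.mem_insert 0 _)

lemma freshDiff_notMem (n : ℕ) : freshDiff n ∉ Dset n :=
  fun h => mex_notMem ((Dset_finite n).insert 0) (Or.inr h)

lemma freshDiff_le {n x : ℕ} (hx : 0 < x) (h : x ∉ Dset n) : freshDiff n ≤ x :=
  mex_le_of_notMem <| by rintro (h' | h') <;> simp_all

lemma mem_Dset_of_lt_freshDiff {n x : ℕ} (hx : 0 < x) (h : x < freshDiff n) : x ∈ Dset n :=
  (mem_of_lt_mex h).resolve_left hx.ne'

lemma lt_freshDiff {n t : ℕ} (h : ∀ x, 0 < x → x ≤ t → x ∈ Dset n) : t < freshDiff n :=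
  lt_mex ((Dset_finite n).insert 0) fun x hx =>
    (Nat.eq_zero_or_pos x).imp id fun hx0 => h x hx0 hx

lemma freshDiff_mono {m n : ℕ} (h : m ≤ n) : freshDiff m ≤ freshDiff n :=
  mex_mono (Set.insert_subset_insert (Dset_mono h)) ((Dset_finite n).insert 0)

lemma freshDiff_le_gap12_succ (n : ℕ) : freshDiff n ≤ gap12 (n + 1) :=
  gap12_succ n ▸ freshDiff_le_freshGap n _

lemma freshDiff_le_gap23_succ (n : ℕ) : freshDiff n ≤ gap23 (n + 1) :=
  gap23_succ n ▸ freshDiff_le_freshGap n _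

section Gaps

variable {f : ℕ → ℕ} {g m : ℕ}

lemma add_le_of_gaps (hf : ∀ i < m, f i + g ≤ f (i + 1)) {j k : ℕ} (hjk : j < k)
    (hk : k ≤ m) : f j + g ≤ f k := by
  induction k, hjk using Nat.le_induction with
  | base => exact hf j hk
  | succ k _ ih =>
    have := hf k (by omega)
    have := ih (by omega)
    omega

lemma le_of_gaps (hf : ∀ i < m, f i + g ≤ f (i + 1)) {j k : ℕ} (hjk : j ≤ k)
    (hk : k ≤ m) : f j ≤ f k := by
  rcases hjk.lt_or_eq with h | rfl
  · exact (Nat.le_add_right _ _).trans (add_le_of_gaps hf h hk)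
  · rfl

lemma eq_of_gaps (hf : ∀ i < m, f i + g ≤ f (i + 1)) {j k : ℕ} (hj : j ≤ m) (hk : k ≤ m)
    (hjk : f j < f k + g) (hkj : f k < f j + g) : f j = f k := by
  rcases lt_trichotomy j k with h | rfl | h
  · exact absurd (add_le_of_gaps hf h hk) (by omega)
  · rfl
  · exact absurd (add_le_of_gaps hf h hj) (by omega)

lemma not_mem_or_not_mem_of_gaps (hf : ∀ i < m, f i + 2 ≤ f (i + 1)) {S : Set ℕ} {x : ℕ}
    (hS : ∀ d ∈ S, x < d → ∃ k ≤ m, d = f k) : x + 1 ∉ S ∨ x + 2 ∉ S := by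
  by_contra! h
  obtain ⟨j, hj, hfj⟩ := hS _ h.1 (by omega)
  obtain ⟨k, hk, hfk⟩ := hS _ h.2 (by omega)
  have := eq_of_gaps hf hj hk (by omega) (by omega)
  omega

/-- Only the two outer values could be taken by `f'`, leaving two adjacent ones to `f`. -/
lemma not_covers_four_of_gaps {f' : ℕ → ℕ} (hf : ∀ i < m, f i + 2 ≤ f (i + 1))
    (hf' : ∀ i < m, f' i + 3 ≤ f' (i + 1)) (x : ℕ) :
    ¬ ∀ i ∈ Finset.Icc 1 4, ∃ k ≤ m, x + i = f k ∨ x + i = f' k := by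
  intro h
  obtain ⟨k₁, hk₁, h₁⟩ := h 1 (by decide)
  obtain ⟨k₂, hk₂, h₂⟩ := h 2 (by decide)
  obtain ⟨k₃, hk₃, h₃⟩ := h 3 (by decide)
  obtain ⟨k₄, hk₄, h₄⟩ := h 4 (by decide)
  rcases h₂ with h₂ | h₂ <;> rcases h₃ with h₃ | h₃
  · have := eq_of_gaps hf hk₂ hk₃ (by omega) (by omega); omega
  · rcases h₁ with h₁ | h₁
    · have := eq_of_gaps hf hk₁ hk₂ (by omega) (by omega); omega
    · have := eq_of_gaps hf' hk₁ hk₃ (by omega) (by omega); omega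
  · rcases h₄ with h₄ | h₄
    · have := eq_of_gaps hf hk₃ hk₄ (by omega) (by omega); omega
    · have := eq_of_gaps hf' hk₂ hk₄ (by omega) (by omega); omega
  · have := eq_of_gaps hf' hk₂ hk₃ (by omega) (by omega); omega

end Gaps

structure Regular (k : ℕ) : Prop where
  gap23_lt : gap23 k < freshDiff k
  gap12_lt : gap12 k < freshDiff k
  freshDiff_le : freshDiff k ≤ gap12 k + 2

namespace Regular

variable {k : ℕ} (h : Regular k)
include h

lemma gap12_lt_succ : gap12 k < gap12 (k + 1) :=
  h.gap12_lt.trans_le (freshDiff_le_gap12_succ k)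

lemma v2_add_two_le : v2 k + 2 ≤ v2 (k + 1) := by
  have := v1_strictMono (Nat.lt_add_one k)
  have := h.gap12_lt_succ
  rw [← v1_add_gap12, ← v1_add_gap12]
  omega

lemma v3_add_three_le : v3 k + 3 ≤ v3 (k + 1) := by
  have := h.v2_add_two_le
  have := h.gap23_lt.trans_le (freshDiff_le_gap23_succ k)
  rw [← v2_add_gap23, ← v2_add_gap23]
  omega

lemma gap12_add_gap23_add_two_le : gap12 k + gap23 k + 2 ≤ gap12 (k + 1) + gap23 (k + 1) := by
  have := h.gap12_lt_succ
  have := h.gap23_lt.trans_le (freshDiff_le_gap23_succ k)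
  omega

end Regular

lemma regular_zero : Regular 0 := by
  have h1 : freshDiff 0 ≤ 1 := freshDiff_le one_pos fun h => by
    obtain ⟨k, hk, hd⟩ := mem_Dset.1 h
    obtain rfl := Nat.le_zero.1 hk
    simp [gap12, gap23, v1, v2, v3, v] at hd
  have h0 := freshDiff_pos 0
  exact ⟨by simp [gap23, v2, v3, v]; omega, by simp [gap12, v1, v2, v]; omega, by omega⟩

section Step

variable {n : ℕ} (H : ∀ k ≤ n, Regular k)
include H

lemma v2_gaps : ∀ i < n + 1, v2 i + 2 ≤ v2 (i + 1) :=
  fun i hi => (H i (Nat.le_of_lt_add_one hi)).v2_add_two_le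

lemma v3_gaps : ∀ i < n + 1, v3 i + 3 ≤ v3 (i + 1) :=
  fun i hi => (H i (Nat.le_of_lt_add_one hi)).v3_add_three_le

lemma gap12_add_gap23_gaps :
    ∀ i < n + 1, gap12 i + gap23 i + 2 ≤ gap12 (i + 1) + gap23 (i + 1) :=
  fun i hi => (H i (Nat.le_of_lt_add_one hi)).gap12_add_gap23_add_two_le

lemma gaps_lt_freshDiff {k : ℕ} (hk : k ≤ n) :
    gap12 k < freshDiff n ∧ gap23 k < freshDiff n :=
  ⟨(H k hk).gap12_lt.trans_le (freshDiff_mono hk),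
    (H k hk).gap23_lt.trans_le (freshDiff_mono hk)⟩

lemma le_v3_of_mem_Fset {y : ℕ} (hy : y ∈ Fset n) : y ≤ v3 n := by
  obtain ⟨k, hk, hy⟩ := mem_Fset.1 hy
  have := le_of_gaps (v3_gaps H) hk n.le_succ
  have := v1_add_gap12 k
  have := v2_add_gap23 k
  omega

lemma exists_eq_v3_of_mem_Fset {y : ℕ} (hy : y ∈ Fset n)
    (hle : v1 (n + 1) + freshDiff n ≤ y) : ∃ k ≤ n, y = v3 k := by
  obtain ⟨k, hk, hy⟩ := mem_Fset.1 hy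
  have := v1_strictMono (Nat.lt_add_one_of_le hk)
  have := (gaps_lt_freshDiff H hk).1
  have := v1_add_gap12 k
  exact ⟨k, hk, by omega⟩

lemma v1_succ_le : v1 (n + 1) ≤ v1 n + 4 := by
  by_contra! hlt
  refine not_covers_four_of_gaps (v2_gaps H) (v3_gaps H) (v1 n) fun i hi => ?_
  obtain ⟨hi1, hi4⟩ := Finset.mem_Icc.1 hi
  obtain ⟨k, hk, hv⟩ := mem_Fset.1 (mem_of_lt_mex (S := Fset n) (m := v1 n + i) (by
    rw [← v1_succ]; omega))
  refine ⟨k, hk.trans n.le_succ, hv.resolve_left fun h => ?_⟩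
  have := v1_strictMono.monotone hk
  omega

lemma gap23_succ_eq : gap23 (n + 1) = freshDiff n := by
  refine le_antisymm ?_ (freshDiff_le_gap23_succ n)
  rw [gap23_succ]
  refine freshGap_le (freshDiff_pos n) (freshDiff_notMem n) fun hF => ?_
  have := le_v3_of_mem_Fset H hF
  have := (H n le_rfl).v2_add_two_le
  have := (H n le_rfl).gap23_lt
  have := v2_add_gap23 n
  omega

/-- Beyond `freshDiff n` the new coordinate `v1 (n + 1) + x` can only collide with some `v3 k`,
and the gaps of `v3` and of `v3 - v1` leave no room for two consecutive collisions. -/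
lemma gap12_succ_le : gap12 (n + 1) ≤ freshDiff n + 2 := by
  set a := v1 (n + 1)
  set M := freshDiff n
  rw [gap12_succ]
  by_cases ha : a + M ∈ Fset n
  · obtain ⟨k₀, hk₀, hk₀v⟩ := exists_eq_v3_of_mem_Fset H ha le_rfl
    have hF : ∀ i, 1 ≤ i → i ≤ 2 → a + (M + i) ∉ Fset n := fun i hi1 hi2 hF => by
      obtain ⟨k, hk, hkv⟩ := exists_eq_v3_of_mem_Fset H hF (by omega)
      have := eq_of_gaps (v3_gaps H) (hk.trans n.le_succ) (hk₀.trans n.le_succ)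
        (by omega) (by omega)
      omega
    have hD : ∀ d ∈ Dset n, M < d → ∃ k ≤ n + 1, d = gap12 k + gap23 k := fun d hd hMd =>
      have ⟨k, hk, hkd⟩ := exists_eq_gap12_add_gap23 hd fun k hk =>
        (gaps_lt_freshDiff H hk).imp (·.trans hMd) (·.trans hMd)
      ⟨k, by omega, hkd⟩
    rcases not_mem_or_not_mem_of_gaps (gap12_add_gap23_gaps H) hD with hD | hD
    · exact (freshGap_le (by omega) hD (hF 1 le_rfl (by omega))).trans (by omega)
    · exact freshGap_le (by omega) hD (hF 2 (by omega) le_rfl)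
  · exact (freshGap_le (freshDiff_pos n) (freshDiff_notMem n) ha).trans (by omega)

lemma gap12_succ_le_add_four : gap12 (n + 1) ≤ gap12 n + 4 := by
  have := gap12_succ_le H
  have := (H n le_rfl).freshDiff_le
  omega

lemma gap12_succ_lt : gap12 (n + 1) < freshDiff (n + 1) := by
  set a := v1 (n + 1)
  set M := freshDiff n
  have hMp := gap12_succ_le H
  refine lt_freshDiff fun x hx hxp => ?_
  rcases lt_trichotomy x M with hxM | rfl | hMx
  · exact Dset_mono n.le_succ (mem_Dset_of_lt_freshDiff hx hxM)
  · exact mem_Dset.2 ⟨n + 1, le_rfl, Or.inr (Or.inl (gap23_succ_eq H).symm)⟩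
  rcases hxp.lt_or_eq with hxp | rfl
  · rw [gap12_succ] at hxp hMp
    rcases mem_of_lt_freshGap hx hxp with hD | hF
    · exact Dset_mono (Nat.le_add_right n 1) hD
    -- then `a + M` and `a + x` would be values of `v3` at distance `1`
    exfalso
    have haM : a + M ∈ Fset n :=
      (mem_of_lt_freshGap (freshDiff_pos n) (hMx.trans hxp)).resolve_left (freshDiff_notMem n)
    obtain ⟨k₀, hk₀, hk₀v⟩ := exists_eq_v3_of_mem_Fset H haM le_rfl
    obtain ⟨k, hk, hkv⟩ := exists_eq_v3_of_mem_Fset H hF (by omega)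
    have := eq_of_gaps (v3_gaps H) (hk.trans n.le_succ) (hk₀.trans n.le_succ)
      (by omega) (by omega)
    omega
  · exact mem_Dset.2 ⟨n + 1, le_rfl, Or.inl rfl⟩

lemma freshDiff_succ_le : freshDiff (n + 1) ≤ gap12 (n + 1) + 2 := by
  have hM := freshDiff_le_gap12_succ n
  have hq := gap23_succ_eq H
  have hD : ∀ d ∈ Dset (n + 1), gap12 (n + 1) < d → ∃ k ≤ n + 1, d = gap12 k + gap23 k :=
    fun d hd hpd => exists_eq_gap12_add_gap23 hd fun k hk => by
      rcases Nat.le_add_one_iff.1 hk with hk | rfl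
      · have := gaps_lt_freshDiff H hk
        omega
      · omega
  rcases not_mem_or_not_mem_of_gaps (gap12_add_gap23_gaps H) hD with hD | hD
  · exact (freshDiff_le (by omega) hD).trans (by omega)
  · exact freshDiff_le (by omega) hD

lemma regular_succ : Regular (n + 1) where
  gap23_lt := (gap23_succ_eq H).trans_lt ((freshDiff_le_gap12_succ n).trans_lt (gap12_succ_lt H))
  gap12_lt := gap12_succ_lt H
  freshDiff_le := freshDiff_succ_le H

end Step

lemma regular (n : ℕ) : Regular n := by
  induction n using Nat.strong_induction_on with
  | _ n ih =>
    cases n with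
    | zero => exact regular_zero
    | succ n => exact regular_succ fun k hk => ih k (Nat.lt_add_one_of_le hk)

theorem stmt11 : ∀ n : ℕ,
    (v2 (n + 1) : ℤ) - v2 n ∈ ({2, 3, 4, 5, 6, 7, 8} : Set ℤ) := by
  intro n
  have H : ∀ k ≤ n, Regular k := fun k _ => regular k
  have hv1 := v1_strictMono (Nat.lt_add_one n)
  have hv1' := v1_succ_le H
  have hp := (regular n).gap12_lt_succ
  have hp' := gap12_succ_le_add_four H
  have h₀ := v1_add_gap12 n
  have h₁ := v1_add_gap12 (n + 1)
  simp only [Set.mem_insert_iff, Set.mem_singleton_iff]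
  omega
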